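/- arXiv:2409.08896 — 2 statements merged into one kernel-verified Lean document; each statement's English description precedes it below -/
import Mathlib

section
/- Let g and ω be weights and suppose g satisfies the doubling condition. If ω ∈ A^avg_∞(g), then ω ∈ A^λ_∞(g). -/
open MeasureTheory Finset

/-- The weighted ergodic average `T^g_{0,k-1}ω(x)`. -/
noncomputable def ergAvgW {X : Type*} (T : X → X) (g ω : X → ℝ) (k : ℕ) (x : X) : ℝ :=
  (∑ i ∈ Finset.range k, g (T^[i] x))⁻¹ *
    ∑ i ∈ Finset.range k, ω (T^[i] x) * g (T^[i] x)

/-- `g` satisfies the doubling condition. -/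
def Doubling {X : Type*} [MeasurableSpace X] (μ : Measure X) (T : X → X) (g : X → ℝ) : Prop :=
  ∃ C : ℝ, ∀ᵐ x ∂μ, ∀ k : ℕ, 2 ≤ k →
    ((∑ j ∈ Finset.range ((k - 1) / 2 + 1), g (T^[j] x))⁻¹ *
        ∑ j ∈ Finset.range k, g (T^[j] x) ≤ C) ∧
    ((∑ j ∈ Finset.Ico ((k - 1) / 2 + 1) k, g (T^[j] x))⁻¹ *
        ∑ j ∈ Finset.range k, g (T^[j] x) ≤ C)

/-- `ω ∈ A^avg_∞(g)`. -/
def MemAavgW {X : Type*} [MeasurableSpace X] (μ : Measure X) (T : X → X) (g ω : X → ℝ) : Prop :=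
  ∃ γ δ : ℝ, 0 < γ ∧ γ < 1 ∧ 0 < δ ∧ δ < 1 ∧
    ∀ᵐ x ∂μ, ∀ k : ℕ, 0 < k →
      (∑ i ∈ Finset.range k, g (T^[i] x))⁻¹ *
        (∑ j ∈ (Finset.range k).filter (fun j => ω (T^[j] x) ≤ γ * ergAvgW T g ω k x),
          g (T^[j] x)) ≤ δ

/-- `ω ∈ A^λ_∞(g)`. -/
def MemAlamW {X : Type*} [MeasurableSpace X] (μ : Measure X) (T : X → X) (g ω : X → ℝ) : Prop :=
  ∃ C β : ℝ, 0 < C ∧ 0 < β ∧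
    ∀ᵐ x ∂μ, ∀ k : ℕ, 0 < k → ∀ lam : ℝ, ergAvgW T g ω k x < lam →
      ∑ i ∈ (Finset.range k).filter (fun i => lam < ω (T^[i] x)),
          ω (T^[i] x) * g (T^[i] x) ≤
        C * lam * ∑ i ∈ (Finset.range k).filter (fun i => β * lam < ω (T^[i] x)), g (T^[i] x)

/-!
Calderón–Zygmund stopping time along an orbit. Fix a point `x` and look at the sequences
`G i = g (T^[i] x)`, `W i = ω (T^[i] x)`; measure preservation makes the doubling and `A^avg_∞`
conditions hold on every interval `[a, b)` of these sequences, for a.e. `x`. Given an interval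
whose `G`-average of `W` is at most `λ`, bisect it repeatedly and stop at the first subinterval `J`
whose average exceeds `λ`. By doubling, that average is at most `Cλ`; by `A^avg_∞`, a proportion
at least `1 - δ` of the `G`-mass of `J` sits where `W > γ λ`. Hence on `J` the mass
`∑ W G ≤ Cλ ∑ G ≤ Cλ/(1-δ) ∑_{W > γλ} G`, while unstopped singletons carry no mass where `W > λ`.
So `ω ∈ A^λ_∞(g)` with constants `C/(1-δ)` and `β = γ`.
-/

section CenterMass

variable {ι : Type*} {G W : ι → ℝ} {s t : Finset ι}

lemma sum_mul_eq_centerMass_mul (hs : ∑ i ∈ s, G i ≠ 0) :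
    ∑ i ∈ s, W i * G i = s.centerMass G W * ∑ i ∈ s, G i := by
  simp only [centerMass, smul_eq_mul, mul_comm (G _)]
  field_simp

lemma centerMass_le_iff (hs : 0 < ∑ i ∈ s, G i) {lam : ℝ} :
    s.centerMass G W ≤ lam ↔ ∑ i ∈ s, W i * G i ≤ lam * ∑ i ∈ s, G i := by
  rw [sum_mul_eq_centerMass_mul hs.ne', mul_le_mul_iff_left₀ hs]

lemma centerMass_nonneg_of_nonneg (hG : ∀ i ∈ s, 0 ≤ G i) (hW : ∀ i ∈ s, 0 ≤ W i) :
    0 ≤ s.centerMass G W := by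
  simp only [centerMass, smul_eq_mul]
  exact mul_nonneg (inv_nonneg.2 (sum_nonneg hG))
    (sum_nonneg fun i hi => mul_nonneg (hG i hi) (hW i hi))

lemma centerMass_le_mul_of_subset {C lam : ℝ} (hG : ∀ i ∈ t, 0 ≤ G i) (hW : ∀ i ∈ t, 0 ≤ W i)
    (hst : s ⊆ t) (hs : 0 < ∑ i ∈ s, G i) (ht : t.centerMass G W ≤ lam)
    (hC : ∑ i ∈ t, G i ≤ C * ∑ i ∈ s, G i) :
    s.centerMass G W ≤ C * lam := by
  have hlam : 0 ≤ lam := (centerMass_nonneg_of_nonneg hG hW).trans ht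
  have ht' : 0 < ∑ i ∈ t, G i :=
    hs.trans_le (sum_le_sum_of_subset_of_nonneg hst fun i hi _ => hG i hi)
  rw [centerMass_le_iff ht'] at ht
  rw [centerMass_le_iff hs]
  calc ∑ i ∈ s, W i * G i ≤ ∑ i ∈ t, W i * G i :=
        sum_le_sum_of_subset_of_nonneg hst fun i hi _ => mul_nonneg (hW i hi) (hG i hi)
    _ ≤ lam * ∑ i ∈ t, G i := ht
    _ ≤ lam * (C * ∑ i ∈ s, G i) := mul_le_mul_of_nonneg_left hC hlam
    _ = C * lam * ∑ i ∈ s, G i := by ring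

lemma sum_filter_lt_le_of_le_centerMass {γ δ lam : ℝ} (hG : ∀ i ∈ s, 0 ≤ G i)
    (hW : ∀ i ∈ s, 0 ≤ W i) (hs : 0 < ∑ i ∈ s, G i) (hγ : 0 ≤ γ) (hδ : δ < 1)
    (hA : ∑ i ∈ s with W i ≤ γ * s.centerMass G W, G i ≤ δ * ∑ i ∈ s, G i)
    (hlam : lam ≤ s.centerMass G W) :
    ∑ i ∈ s with lam < W i, W i * G i ≤
      s.centerMass G W / (1 - δ) * ∑ i ∈ s with γ * lam < W i, G i := by
  have hsum := sum_mul_eq_centerMass_mul (W := W) hs.ne'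
  set A := s.centerMass G W
  have hA0 : 0 ≤ A := centerMass_nonneg_of_nonneg hG hW
  have hmass : (1 - δ) * ∑ i ∈ s, G i ≤ ∑ i ∈ s with γ * lam < W i, G i :=
    calc (1 - δ) * ∑ i ∈ s, G i ≤ ∑ i ∈ s with ¬ W i ≤ γ * A, G i := by
          linarith [sum_filter_add_sum_filter_not s (fun i => W i ≤ γ * A) G]
      _ ≤ ∑ i ∈ s with γ * lam < W i, G i :=
          sum_le_sum_of_subset_of_nonneg
            (monotone_filter_right s fun i _ hi =>
              (mul_le_mul_of_nonneg_left hlam hγ).trans_lt (not_le.1 hi))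
            fun i hi _ => hG i (mem_filter.1 hi).1
  calc ∑ i ∈ s with lam < W i, W i * G i ≤ ∑ i ∈ s, W i * G i :=
        sum_le_sum_of_subset_of_nonneg (filter_subset _ s)
          fun i hi _ => mul_nonneg (hW i hi) (hG i hi)
    _ = A / (1 - δ) * ((1 - δ) * ∑ i ∈ s, G i) := by
        rw [hsum]
        field_simp [(sub_pos.2 hδ).ne']
    _ ≤ A / (1 - δ) * ∑ i ∈ s with γ * lam < W i, G i :=
        mul_le_mul_of_nonneg_left hmass (div_nonneg hA0 (sub_pos.2 hδ).le)

lemma sum_filter_lt_le_of_subset {C γ δ lam : ℝ} (hG : ∀ i ∈ t, 0 ≤ G i)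
    (hW : ∀ i ∈ t, 0 ≤ W i) (hst : s ⊆ t) (hs : 0 < ∑ i ∈ s, G i) (hγ : 0 ≤ γ) (hδ : δ < 1)
    (hA : ∑ i ∈ s with W i ≤ γ * s.centerMass G W, G i ≤ δ * ∑ i ∈ s, G i)
    (ht : t.centerMass G W ≤ lam) (hC : ∑ i ∈ t, G i ≤ C * ∑ i ∈ s, G i)
    (hlam : lam ≤ s.centerMass G W) :
    ∑ i ∈ s with lam < W i, W i * G i ≤ C / (1 - δ) * lam * ∑ i ∈ s with γ * lam < W i, G i := by
  have hGs : ∀ i ∈ s, 0 ≤ G i := fun i hi => hG i (hst hi)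
  have hWs : ∀ i ∈ s, 0 ≤ W i := fun i hi => hW i (hst hi)
  have hδ' := sub_pos.2 hδ
  calc _ ≤ s.centerMass G W / (1 - δ) * ∑ i ∈ s with γ * lam < W i, G i :=
        sum_filter_lt_le_of_le_centerMass hGs hWs hs hγ hδ hA hlam
    _ ≤ C * lam / (1 - δ) * ∑ i ∈ s with γ * lam < W i, G i := by
        gcongr
        · exact sum_nonneg fun i hi => hGs i (mem_filter.1 hi).1
        · exact centerMass_le_mul_of_subset hG hW hst hs ht hC
    _ = _ := by ring

end CenterMass

section Bisection

/-- The children of `[a, b)` are `[a, splitPoint a b)` and `[splitPoint a b, b)`; for `a = 0`,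
`b = k` this is the bisection of `{0, …, k - 1}` used in `Doubling`. -/
def splitPoint (a b : ℕ) : ℕ := a + ((b - a - 1) / 2 + 1)

def IsDoublingSeq (C : ℝ) (G : ℕ → ℝ) : Prop :=
  ∀ a b, a + 2 ≤ b →
    ∑ i ∈ Ico a b, G i ≤ C * ∑ i ∈ Ico a (splitPoint a b), G i ∧
      ∑ i ∈ Ico a b, G i ≤ C * ∑ i ∈ Ico (splitPoint a b) b, G i

def IsAavgSeq (γ δ : ℝ) (G W : ℕ → ℝ) : Prop :=
  ∀ a b, a < b →
    ∑ i ∈ Ico a b with W i ≤ γ * (Ico a b).centerMass G W, G i ≤ δ * ∑ i ∈ Ico a b, G i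

lemma sum_filter_Ico_consecutive {M : Type*} [AddCommMonoid M] (p : ℕ → Prop) [DecidablePred p]
    (f : ℕ → M) {a m b : ℕ} (ham : a ≤ m) (hmb : m ≤ b) :
    ∑ i ∈ Ico a b with p i, f i = ∑ i ∈ Ico a m with p i, f i + ∑ i ∈ Ico m b with p i, f i := by
  simp only [sum_filter]
  exact (sum_Ico_consecutive _ ham hmb).symm

theorem IsDoublingSeq.sum_filter_lt_le {C γ δ : ℝ} {G W : ℕ → ℝ} (hD : IsDoublingSeq C G)
    (hA : IsAavgSeq γ δ G W) (hG : ∀ i, 0 < G i) (hW : ∀ i, 0 ≤ W i) (hC : 0 ≤ C)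
    (hγ : 0 ≤ γ) (hδ : δ < 1) {a b : ℕ} (hab : a < b) {lam : ℝ}
    (hlam : (Ico a b).centerMass G W ≤ lam) :
    ∑ i ∈ Ico a b with lam < W i, W i * G i ≤
      C / (1 - δ) * lam * ∑ i ∈ Ico a b with γ * lam < W i, G i := by
  induction hn : b - a using Nat.strong_induction_on generalizing a b with
  | _ n ih =>
  have hpos : ∀ c d, c < d → 0 < ∑ i ∈ Ico c d, G i := fun c d hcd =>
    sum_pos (fun i _ => hG i) (nonempty_Ico.2 hcd)
  obtain rfl | hb := eq_or_ne b (a + 1)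
  · have hlam0 : 0 ≤ lam :=
      (centerMass_nonneg_of_nonneg (fun i _ => (hG i).le) fun i _ => hW i).trans hlam
    rw [Nat.Ico_succ_singleton, centerMass_singleton _ _ (hG a).ne'] at hlam
    rw [Nat.Ico_succ_singleton, filter_singleton, if_neg hlam.not_gt, sum_empty]
    have : 0 ≤ ∑ i ∈ {a} with γ * lam < W i, G i := sum_nonneg fun i _ => (hG i).le
    have := sub_pos.2 hδ
    positivity
  have child : ∀ c d, c < d → d - c < n → Ico c d ⊆ Ico a b →
      ∑ i ∈ Ico a b, G i ≤ C * ∑ i ∈ Ico c d, G i →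
      ∑ i ∈ Ico c d with lam < W i, W i * G i ≤
        C / (1 - δ) * lam * ∑ i ∈ Ico c d with γ * lam < W i, G i := by
    intro c d hcd hlen hsub hdbl
    by_cases hstop : (Ico c d).centerMass G W ≤ lam
    · exact ih _ hlen hcd hstop rfl
    · exact sum_filter_lt_le_of_subset (fun i _ => (hG i).le) (fun i _ => hW i) hsub
        (hpos c d hcd) hγ hδ (hA c d hcd) hlam hdbl (not_le.1 hstop).le
  have ham : a < splitPoint a b := by unfold splitPoint; omega
  have hmb : splitPoint a b < b := by unfold splitPoint; omega
  obtain ⟨hleft, hright⟩ := hD a b (by omega)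
  rw [sum_filter_Ico_consecutive _ _ ham.le hmb.le, sum_filter_Ico_consecutive _ _ ham.le hmb.le,
    mul_add]
  exact add_le_add (child a _ ham (by omega) (Ico_subset_Ico le_rfl hmb.le) hleft)
    (child _ b hmb (by omega) (Ico_subset_Ico ham.le le_rfl) hright)

end Bisection

section Orbit

variable {X : Type*} {T : X → X}

lemma sum_Ico_iterate_iterate (F : X → ℝ) (x : X) (a c d : ℕ) :
    ∑ i ∈ Ico c d, F (T^[i] (T^[a] x)) = ∑ i ∈ Ico (c + a) (d + a), F (T^[i] x) := by
  simp only [← Function.iterate_add_apply]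
  exact sum_Ico_add' (fun i => F (T^[i] x)) c d a

lemma ergAvgW_iterate (g ω : X → ℝ) (x : X) (a k : ℕ) :
    ergAvgW T g ω k (T^[a] x) =
      (Ico a (k + a)).centerMass (fun i => g (T^[i] x)) (fun i => ω (T^[i] x)) := by
  simp only [ergAvgW, centerMass, smul_eq_mul, range_eq_Ico, sum_Ico_iterate_iterate g,
    sum_Ico_iterate_iterate (fun y => ω y * g y), zero_add, mul_comm (g _)]

lemma MeasureTheory.MeasurePreserving.ae_forall_iterate [MeasurableSpace X] {μ : Measure X}
    (hT : MeasurePreserving T μ μ) {P : X → Prop} (h : ∀ᵐ x ∂μ, P x) :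
    ∀ᵐ x ∂μ, ∀ a : ℕ, P (T^[a] x) :=
  ae_all_iff.2 fun a => (hT.iterate a).quasiMeasurePreserving.ae h

variable [MeasurableSpace X] {μ : Measure X} {g ω : X → ℝ}

lemma Doubling.exists_ae_isDoublingSeq (hT : MeasurePreserving T μ μ) (hg : ∀ x, 0 < g x)
    (hD : Doubling μ T g) : ∃ C, 0 < C ∧ ∀ᵐ x ∂μ, IsDoublingSeq C fun i => g (T^[i] x) := by
  obtain ⟨C, hC⟩ := hD
  refine ⟨max C 1, by positivity, ?_⟩
  filter_upwards [hT.ae_forall_iterate hC] with x hx a b hab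
  have hpos : ∀ c d, c < d → 0 < ∑ i ∈ Ico c d, g (T^[i] x) := fun c d hcd =>
    sum_pos (fun i _ => hg _) (nonempty_Ico.2 hcd)
  have hm : (b - a - 1) / 2 + 1 + a = splitPoint a b := by unfold splitPoint; omega
  have hb : b - a + a = b := by omega
  obtain ⟨hleft, hright⟩ := hx a (b - a) (by omega)
  simp only [range_eq_Ico, sum_Ico_iterate_iterate g, zero_add, hm, hb] at hleft hright
  rw [inv_mul_le_iff₀ (hpos _ _ (by unfold splitPoint; omega))] at hleft hright
  have hmono : ∀ c d, c < d →
      (∑ i ∈ Ico c d, g (T^[i] x)) * C ≤ max C 1 * ∑ i ∈ Ico c d, g (T^[i] x) := fun c d hcd => by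
    rw [mul_comm]
    exact mul_le_mul_of_nonneg_right (le_max_left _ _) (hpos c d hcd).le
  exact ⟨hleft.trans (hmono a _ (by unfold splitPoint; omega)),
    hright.trans (hmono _ b (by unfold splitPoint; omega))⟩

lemma MemAavgW.exists_ae_isAavgSeq (hT : MeasurePreserving T μ μ) (hg : ∀ x, 0 < g x)
    (hA : MemAavgW μ T g ω) : ∃ γ δ, 0 < γ ∧ δ < 1 ∧
      ∀ᵐ x ∂μ, IsAavgSeq γ δ (fun i => g (T^[i] x)) fun i => ω (T^[i] x) := by
  obtain ⟨γ, δ, hγ, -, -, hδ, hA⟩ := hA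
  refine ⟨γ, δ, hγ, hδ, ?_⟩
  filter_upwards [hT.ae_forall_iterate hA] with x hx a b hab
  have hb : b - a + a = b := by omega
  have := hx a (b - a) (by omega)
  rw [ergAvgW_iterate, hb, sum_filter] at this
  set t := γ * (Ico a b).centerMass (fun i => g (T^[i] x)) fun i => ω (T^[i] x)
  simp only [range_eq_Ico, sum_Ico_iterate_iterate g, zero_add, hb,
    sum_Ico_iterate_iterate (fun y => if ω y ≤ t then g y else 0)] at this
  rw [inv_mul_le_iff₀ (sum_pos (fun i _ => hg _) (nonempty_Ico.2 hab)), ← sum_filter] at this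
  linarith

end Orbit

theorem stmt10_general {X : Type*} [MeasurableSpace X] (μ : Measure X)
    (T : X → X) (hTerg : Ergodic T μ)
    (g ω : X → ℝ) (hgpos : ∀ x, 0 < g x)
    (hωpos : ∀ x, 0 < ω x)
    (hgd : Doubling μ T g) (h : MemAavgW μ T g ω) :
    MemAlamW μ T g ω := by
  have hT := hTerg.toMeasurePreserving
  obtain ⟨C, hC, hD⟩ := hgd.exists_ae_isDoublingSeq hT hgpos
  obtain ⟨γ, δ, hγ, hδ, hA⟩ := h.exists_ae_isAavgSeq hT hgpos
  refine ⟨C / (1 - δ), γ, div_pos hC (sub_pos.2 hδ), hγ, ?_⟩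
  filter_upwards [hD, hA] with x hDx hAx k hk lam hlam
  have hlam' := hlam.le
  rw [← Function.iterate_zero_apply T x, ergAvgW_iterate, add_zero] at hlam'
  simpa only [range_eq_Ico] using
    hDx.sum_filter_lt_le hAx (fun i => hgpos _) (fun i => (hωpos _).le) hC.le hγ.le hδ hk hlam'

theorem stmt10 {X : Type*} [MeasurableSpace X] (μ : Measure X)
    [IsProbabilityMeasure μ] [NullSingletonClass μ] (hcomp : μ.IsComplete)
    (T : X → X) (hTbij : Function.Bijective T) (hTerg : Ergodic T μ)
    (g ω : X → ℝ) (hg : Measurable g) (hgpos : ∀ x, 0 < g x)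
    (hω : Measurable ω) (hωpos : ∀ x, 0 < ω x)
    (hgd : Doubling μ T g) (h : MemAavgW μ T g ω) :
    MemAlamW μ T g ω :=
  stmt10_general μ T hTerg g ω hgpos hωpos hgd h
end

section
/- Let g and ω be weights and suppose g satisfies the doubling condition. If ω ∈ A^λ_∞(g), then there exist constants C, q > 1 such that ω ∈ RH_q(g), i.e., (T^g_{0,k-1}ω^q(x))^{1/q} ≤ C·T^g_{0,k-1}ω(x) for a.e. x ∈ X and every positive integer k. -/
open MeasureTheory Finset

/-- `ω ∈ RH_q(g)` with constant `C`. -/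
def MemRHW {X : Type*} [MeasurableSpace X] (μ : Measure X) (T : X → X) (g ω : X → ℝ)
    (C q : ℝ) : Prop :=
  ∀ᵐ x ∂μ, ∀ k : ℕ, 0 < k →
    ((∑ i ∈ Finset.range k, g (T^[i] x))⁻¹ *
        ∑ i ∈ Finset.range k, ω (T^[i] x) ^ q * g (T^[i] x)) ^ (1 / q) ≤
      C * ergAvgW T g ω k x


/-!
Integrate the `A^λ_∞` inequality against `(q - 1) λ^(q-2) dλ` over `λ > A`, where `A` is the
`g`-weighted average of `ω` over the orbit segment. By the layer-cake formula the left side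
dominates `∑ ω^q g - A^q ∑ g`, while the right side is at most `(q - 1) C / (q β^q) · ∑ ω^q g`.
For `q` close enough to `1` this factor is at most `1/2`, which gives `∑ ω^q g ≤ 2 A^q ∑ g`.
-/

open Set Filter Topology

-- `ergAvgW T g ω k x` unfolds to `weightedAvg (range k) (g ∘ T^[·] x) (ω ∘ T^[·] x)`.
noncomputable def weightedAvg {ι : Type*} (s : Finset ι) (g f : ι → ℝ) : ℝ :=
  (∑ i ∈ s, g i)⁻¹ * ∑ i ∈ s, f i * g i

lemma integrableOn_indicator_Iio_rpow {p : ℝ} (hp : -1 < p) (a b : ℝ) :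
    IntegrableOn ((Iio b).indicator (· ^ p)) (Ioi a) := by
  rw [IntegrableOn, integrable_indicator_iff measurableSet_Iio, IntegrableOn,
    Measure.restrict_restrict measurableSet_Iio, inter_comm, Ioi_inter_Iio]
  exact (intervalIntegral.intervalIntegrable_rpow' hp (a := a) (b := b)).1.mono_set
    Ioo_subset_Ioc_self

lemma integral_Ioi_indicator_Iio_rpow {p : ℝ} (hp : -1 < p) (a b : ℝ) :
    ∫ t in Ioi a, (Iio b).indicator (· ^ p) t =
      (max b a ^ (p + 1) - a ^ (p + 1)) / (p + 1) := by
  have hIoo : Ioo a b = Ioo a (max b a) := by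
    ext t; simp only [Set.mem_Ioo, lt_max_iff]; grind
  rw [setIntegral_indicator measurableSet_Iio, Ioi_inter_Iio, hIoo,
    ← integral_Ioc_eq_integral_Ioo, ← intervalIntegral.integral_of_le (le_max_right b a),
    integral_rpow (Or.inl hp)]

section LayerCake

variable {ι : Type*} (s : Finset ι) (c w : ι → ℝ) {p : ℝ}

lemma rpow_mul_sum_filter_lt (t : ℝ) :
    t ^ p * ∑ i ∈ s with t < w i, c i = ∑ i ∈ s, c i * (Iio (w i)).indicator (· ^ p) t := by
  rw [sum_filter, mul_sum]
  refine sum_congr rfl fun i _ => ?_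
  by_cases h : t < w i <;> simp [h, mul_comm]

lemma integrableOn_rpow_mul_sum_filter_lt (hp : -1 < p) (a : ℝ) :
    IntegrableOn (fun t => t ^ p * ∑ i ∈ s with t < w i, c i) (Ioi a) := by
  simp_rw [rpow_mul_sum_filter_lt]
  exact integrable_finsetSum _ fun i _ => (integrableOn_indicator_Iio_rpow hp a (w i)).const_mul _

lemma integral_rpow_mul_sum_filter_lt (hp : -1 < p) (a : ℝ) :
    ∫ t in Ioi a, t ^ p * ∑ i ∈ s with t < w i, c i =
      ∑ i ∈ s, c i * ((max (w i) a ^ (p + 1) - a ^ (p + 1)) / (p + 1)) := by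
  simp_rw [rpow_mul_sum_filter_lt]
  rw [integral_finsetSum _ fun i _ => (integrableOn_indicator_Iio_rpow hp a (w i)).const_mul _]
  simp_rw [integral_const_mul, integral_Ioi_indicator_Iio_rpow hp]

end LayerCake

section WeightedAvg

variable {ι : Type*} {s : Finset ι} {g f : ι → ℝ}

lemma weightedAvg_nonneg (hg : ∀ i ∈ s, 0 ≤ g i) (hf : ∀ i ∈ s, 0 ≤ f i) :
    0 ≤ weightedAvg s g f :=
  mul_nonneg (inv_nonneg.2 (sum_nonneg hg)) (sum_nonneg fun i hi => mul_nonneg (hf i hi) (hg i hi))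

lemma weightedAvg_pos (hs : s.Nonempty) (hg : ∀ i ∈ s, 0 < g i) (hf : ∀ i ∈ s, 0 < f i) :
    0 < weightedAvg s g f :=
  mul_pos (inv_pos.2 (sum_pos hg hs)) (sum_pos (fun i hi => mul_pos (hf i hi) (hg i hi)) hs)

end WeightedAvg

lemma rpow_le_max_rpow_sub_one_mul {w q : ℝ} (a : ℝ) (hw : 0 < w) (hq : 1 ≤ q) :
    w ^ q ≤ max w a ^ (q - 1) * w := by
  have hq1 : 0 ≤ q - 1 := by linarith
  calc w ^ q = w ^ (q - 1) * w := by rw [Real.rpow_sub_one hw.ne', div_mul_cancel₀ _ hw.ne']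
    _ ≤ max w a ^ (q - 1) * w := by gcongr; exact le_max_left w a

lemma max_rpow_sub_rpow_le {a b : ℝ} (q : ℝ) (ha : 0 ≤ a) (hb : 0 ≤ b) :
    max b a ^ q - a ^ q ≤ b ^ q := by
  rcases le_total b a with hba | hab
  · rw [max_eq_right hba, sub_self]; exact Real.rpow_nonneg hb q
  · rw [max_eq_left hab]; linarith [Real.rpow_nonneg ha q]

lemma rpow_one_div_le_two_mul {x a q : ℝ} (hx : 0 ≤ x) (ha : 0 ≤ a) (hq : 1 ≤ q)
    (h : x ≤ 2 * a ^ q) : x ^ (1 / q) ≤ 2 * a := by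
  have hq0 : 0 < q := by linarith
  calc x ^ (1 / q) ≤ (2 * a ^ q) ^ (1 / q) := Real.rpow_le_rpow hx h (by positivity)
    _ = 2 ^ (1 / q) * a := by
      rw [Real.mul_rpow zero_le_two (Real.rpow_nonneg ha q), one_div,
        Real.rpow_rpow_inv ha hq0.ne']
    _ ≤ 2 * a := by
      gcongr
      exact Real.rpow_le_self_of_one_le one_le_two ((div_le_one hq0).2 hq)

lemma exists_one_lt_two_mul_sub_one_mul_le (C : ℝ) {β : ℝ} (hβ : 0 < β) :
    ∃ q, 1 < q ∧ 2 * (q - 1) * C ≤ q * β ^ q := by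
  have hcont : ContinuousAt (fun q : ℝ => q * β ^ q - 2 * (q - 1) * C) 1 := by
    have := Real.continuousAt_const_rpow (a := β) (b := 1) hβ.ne'
    fun_prop
  have hpos : ∀ᶠ q in 𝓝[>] 1, 0 < q * β ^ q - 2 * (q - 1) * C :=
    nhdsWithin_le_nhds (hcont.eventually (lt_mem_nhds (by simpa using hβ)))
  obtain ⟨q, hq, hq1⟩ := (hpos.and self_mem_nhdsWithin).exists
  exact ⟨q, hq1, by linarith⟩

lemma sum_rpow_mul_le_add_integral {ι : Type*} {s : Finset ι} {g w : ι → ℝ} {q : ℝ} (a : ℝ)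
    (hg : ∀ i ∈ s, 0 ≤ g i) (hw : ∀ i ∈ s, 0 < w i) (hq : 1 < q) :
    ∑ i ∈ s, w i ^ q * g i ≤ a ^ (q - 1) * ∑ i ∈ s, w i * g i +
      (q - 1) * ∫ t in Ioi a, t ^ (q - 2) * ∑ i ∈ s with t < w i, w i * g i := by
  rw [integral_rpow_mul_sum_filter_lt _ _ _ (by linarith) a, show q - 2 + 1 = q - 1 by ring,
    mul_sum, mul_sum, ← sum_add_distrib]
  refine sum_le_sum fun i hi => ?_
  have hmax := mul_le_mul_of_nonneg_right (rpow_le_max_rpow_sub_one_mul a (hw i hi) hq.le)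
    (hg i hi)
  have hcancel : (q - 1) * (w i * g i * ((max (w i) a ^ (q - 1) - a ^ (q - 1)) / (q - 1))) =
      max (w i) a ^ (q - 1) * w i * g i - a ^ (q - 1) * (w i * g i) := by
    field_simp [show q - 1 ≠ 0 by linarith]
  linarith

lemma integral_rpow_mul_sum_filter_lt_div_le {ι : Type*} {s : Finset ι} {g w : ι → ℝ}
    {a β q : ℝ} (ha : 0 ≤ a) (hg : ∀ i ∈ s, 0 ≤ g i) (hw : ∀ i ∈ s, 0 ≤ w i) (hβ : 0 < β)
    (hq : 0 < q) :
    ∫ t in Ioi a, t ^ (q - 1) * ∑ i ∈ s with t < w i / β, g i ≤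
      (∑ i ∈ s, w i ^ q * g i) / (q * β ^ q) := by
  rw [integral_rpow_mul_sum_filter_lt _ _ _ (by linarith) a, sub_add_cancel, sum_div]
  refine sum_le_sum fun i hi => ?_
  have hmax := max_rpow_sub_rpow_le q ha (div_nonneg (hw i hi) hβ.le)
  rw [Real.div_rpow (hw i hi) hβ.le] at hmax
  have hgi := hg i hi
  calc g i * ((max (w i / β) a ^ q - a ^ q) / q) ≤ g i * (w i ^ q / β ^ q / q) := by gcongr
    _ = w i ^ q * g i / (q * β ^ q) := by ring

theorem weightedAvg_rpow_le_two_mul_rpow {ι : Type*} {s : Finset ι} {g w : ι → ℝ} {C β q : ℝ}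
    (hs : s.Nonempty) (hg : ∀ i ∈ s, 0 < g i) (hw : ∀ i ∈ s, 0 < w i)
    (hC : 0 ≤ C) (hβ : 0 < β) (hq : 1 < q) (hqC : 2 * (q - 1) * C ≤ q * β ^ q)
    (h : ∀ t, weightedAvg s g w < t →
      ∑ i ∈ s with t < w i, w i * g i ≤ C * t * ∑ i ∈ s with β * t < w i, g i) :
    weightedAvg s g (fun i => w i ^ q) ≤ 2 * weightedAvg s g w ^ q := by
  set a := weightedAvg s g w
  set G := ∑ i ∈ s, g i
  set S := ∑ i ∈ s, w i ^ q * g i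
  have hG : 0 < G := sum_pos hg hs
  have ha : 0 < a := weightedAvg_pos hs hg hw
  have hS : 0 ≤ S := sum_nonneg fun i hi => mul_nonneg (Real.rpow_nonneg (hw i hi).le q) (hg i hi).le
  have hsum : ∑ i ∈ s, w i * g i = a * G := by
    simp only [a, weightedAvg]; rw [inv_mul_eq_div, div_mul_cancel₀ _ hG.ne']
  have haq : a ^ (q - 1) * ∑ i ∈ s, w i * g i = a ^ q * G := by
    rw [hsum, Real.rpow_sub_one ha.ne']; field_simp
  have middle : ∫ t in Ioi a, t ^ (q - 2) * ∑ i ∈ s with t < w i, w i * g i ≤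
      C * ∫ t in Ioi a, t ^ (q - 1) * ∑ i ∈ s with t < w i / β, g i := by
    rw [← integral_const_mul]
    refine setIntegral_mono_on (integrableOn_rpow_mul_sum_filter_lt _ _ _ (by linarith) a)
      ((integrableOn_rpow_mul_sum_filter_lt _ _ _ (by linarith) a).const_mul C)
      measurableSet_Ioi fun t ht => ?_
    have ht0 : 0 < t := ha.trans ht
    have hfilter : {i ∈ s | t < w i / β} = {i ∈ s | β * t < w i} :=
      filter_congr fun i _ => by rw [lt_div_iff₀ hβ, mul_comm]
    calc t ^ (q - 2) * ∑ i ∈ s with t < w i, w i * g i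
        ≤ t ^ (q - 2) * (C * t * ∑ i ∈ s with β * t < w i, g i) :=
          mul_le_mul_of_nonneg_left (h t ht) (Real.rpow_nonneg ht0.le _)
      _ = C * (t ^ (q - 1) * ∑ i ∈ s with t < w i / β, g i) := by
          rw [hfilter, show q - 1 = q - 2 + 1 by ring, Real.rpow_add_one ht0.ne']; ring
  have upper := integral_rpow_mul_sum_filter_lt_div_le ha.le (fun i hi => (hg i hi).le)
    (fun i hi => (hw i hi).le) hβ (by linarith : 0 < q)
  have absorb : (q - 1) * (C * (S / (q * β ^ q))) ≤ S / 2 := by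
    have hqβ : 0 < q * β ^ q := by positivity
    calc (q - 1) * (C * (S / (q * β ^ q))) = 2 * (q - 1) * C * S / (2 * (q * β ^ q)) := by ring
      _ ≤ q * β ^ q * S / (2 * (q * β ^ q)) := by gcongr
      _ = S / 2 := by field_simp
  have hS_le : S ≤ 2 * a ^ q * G := by
    have := mul_le_mul_of_nonneg_left (middle.trans (mul_le_mul_of_nonneg_left upper hC))
      (by linarith : 0 ≤ q - 1)
    linarith [sum_rpow_mul_le_add_integral a (fun i hi => (hg i hi).le) hw hq]
  show G⁻¹ * S ≤ 2 * a ^ q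
  rwa [inv_mul_le_iff₀ hG, mul_comm G]

theorem stmt11_general {X : Type*} [MeasurableSpace X] (μ : Measure X) (T : X → X)
    (g ω : X → ℝ) (hgpos : ∀ x, 0 < g x) (hωpos : ∀ x, 0 < ω x) (h : MemAlamW μ T g ω) :
    ∃ C q : ℝ, 1 < C ∧ 1 < q ∧ MemRHW μ T g ω C q := by
  obtain ⟨C, β, hC, hβ, hAlam⟩ := h
  obtain ⟨q, hq, hqC⟩ := exists_one_lt_two_mul_sub_one_mul_le C hβ
  refine ⟨2, q, one_lt_two, hq, ?_⟩
  filter_upwards [hAlam] with x hx k hk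
  have hs : (range k).Nonempty := nonempty_range_iff.2 hk.ne'
  exact rpow_one_div_le_two_mul
    (weightedAvg_nonneg (fun _ _ => (hgpos _).le) fun _ _ => (Real.rpow_pos_of_pos (hωpos _) q).le)
    (weightedAvg_nonneg (fun _ _ => (hgpos _).le) fun _ _ => (hωpos _).le) hq.le
    (weightedAvg_rpow_le_two_mul_rpow hs (fun _ _ => hgpos _) (fun _ _ => hωpos _) hC.le hβ hq
      hqC (hx k hk))

theorem stmt11 {X : Type*} [MeasurableSpace X] (μ : Measure X)
    [IsProbabilityMeasure μ] [NullSingletonClass μ] (hcomp : μ.IsComplete)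
    (T : X → X) (hTbij : Function.Bijective T) (hTerg : Ergodic T μ)
    (g ω : X → ℝ) (hg : Measurable g) (hgpos : ∀ x, 0 < g x)
    (hω : Measurable ω) (hωpos : ∀ x, 0 < ω x)
    (hgd : Doubling μ T g) (h : MemAlamW μ T g ω) :
    ∃ C q : ℝ, 1 < C ∧ 1 < q ∧ MemRHW μ T g ω C q :=
  stmt11_general μ T g ω hgpos hωpos h
end
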